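/- Let k' be a squarefree odd positive integer with exactly L prime factors and let B ≥ 8√(k'). Then ∑_{d | k'} ∑_{e | d} (1/φ(d/e)) · ∑_{a > B√(e/d), gcd(a,d)=e} μ(a)²/φ(a²) ≤ 2^L · ∑_{a > B/√(k')} μ(a)²/φ(a²). -/

import Mathlib

/-!
Fix `d ∣ k'`. The integer `a` determines `e = gcd(a, d)`, so for different `e` the inner sums run
over disjoint sets, and each of them lies in the tail `a > B / √k'` because `e ≥ 1` and `d ≤ k'`.
As `1 / φ(d / e) ≤ 1`, every `d` contributes at most the tail sum, and a squarefree `k'` with `L`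
prime factors has `2 ^ L` divisors. The tail sums are finite since `φ(a²) = a φ(a)` and
`a ≤ 2 φ(a)²` for squarefree `a`, so the summand is `O(a^(-3/2))`.
-/

open ArithmeticFunction
open scoped Nat ArithmeticFunction.Moebius

theorem Nat.totient_sq (n : ℕ) : φ (n ^ 2) = n * φ n := by
  rcases Nat.eq_zero_or_pos n with rfl | hn
  · simp
  have h := Nat.totient_gcd_mul_totient_mul n n
  rw [Nat.gcd_self, ← sq] at h
  exact Nat.eq_of_mul_eq_mul_left (Nat.totient_pos.mpr hn) (by rw [h]; ring)

theorem Nat.prod_le_two_mul_prod_sub_one_sq {s : Finset ℕ} (hs : ∀ p ∈ s, p.Prime) :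
    ∏ p ∈ s, p ≤ 2 * ∏ p ∈ s, (p - 1) ^ 2 := by
  -- Only the prime 2 violates `p ≤ (p - 1) ^ 2`, and it occurs at most once.
  have hp : ∀ p ∈ s, p ≤ (p - 1) ^ 2 * if p = 2 then 2 else 1 := by
    intro p hp
    split_ifs with h2
    · simp [h2]
    · have h3 : 3 ≤ p := by have := (hs p hp).two_le; omega
      rw [mul_one]
      zify [h3.trans' (by norm_num : 1 ≤ 3)]
      nlinarith
  calc ∏ p ∈ s, p ≤ ∏ p ∈ s, ((p - 1) ^ 2 * if p = 2 then 2 else 1) :=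
        Finset.prod_le_prod' hp
    _ = (∏ p ∈ s, (p - 1) ^ 2) * if 2 ∈ s then 2 else 1 := by
        rw [Finset.prod_mul_distrib, Finset.prod_ite_eq']
    _ ≤ 2 * ∏ p ∈ s, (p - 1) ^ 2 := by
        rw [mul_comm]; gcongr; split_ifs <;> norm_num

theorem Squarefree.totient_eq_prod_sub_one {n : ℕ} (hn : Squarefree n) :
    φ n = ∏ p ∈ n.primeFactors, (p - 1) := by
  have h := Nat.totient_mul_prod_primeFactors n
  rw [Nat.prod_primeFactors_of_squarefree hn, mul_comm] at h
  exact Nat.eq_of_mul_eq_mul_left (Nat.pos_of_ne_zero hn.ne_zero) h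

theorem Squarefree.le_two_mul_totient_sq {n : ℕ} (hn : Squarefree n) : n ≤ 2 * φ n ^ 2 := by
  conv_lhs => rw [← Nat.prod_primeFactors_of_squarefree hn]
  rw [hn.totient_eq_prod_sub_one, ← Finset.prod_pow]
  exact Nat.prod_le_two_mul_prod_sub_one_sq fun p => Nat.prime_of_mem_primeFactors

theorem Squarefree.card_divisors {n : ℕ} (hn : Squarefree n) :
    n.divisors.card = 2 ^ n.primeFactors.card := by
  rw [Nat.card_divisors hn.ne_zero, ← Finset.prod_const]
  refine Finset.prod_congr rfl fun p hp => ?_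
  rw [Nat.factorization_eq_one_of_squarefree hn (Nat.prime_of_mem_primeFactors hp)
    (Nat.dvd_of_mem_primeFactors hp)]

theorem moebius_sq_div_totient_sq_le (a : ℕ) :
    (μ a : ℝ) ^ 2 / φ (a ^ 2) ≤ Real.sqrt 2 * ((a : ℝ) ^ (3 / 2 : ℝ))⁻¹ := by
  by_cases ha : Squarefree a
  swap
  · rw [moebius_eq_zero_of_not_squarefree ha, Int.cast_zero, zero_pow two_ne_zero, zero_div]
    positivity
  have hapos : (0 : ℝ) < a := by exact_mod_cast Nat.pos_of_ne_zero ha.ne_zero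
  have hφ : (0 : ℝ) < φ a := by
    exact_mod_cast Nat.totient_pos.mpr (Nat.pos_of_ne_zero ha.ne_zero)
  have hrpow : (a : ℝ) ^ (3 / 2 : ℝ) = a * Real.sqrt a := by
    rw [show (3 / 2 : ℝ) = 1 + 1 / 2 by norm_num, Real.rpow_add hapos, Real.rpow_one,
      Real.sqrt_eq_rpow]
  have hsqrt : Real.sqrt a ≤ Real.sqrt 2 * φ a := by
    rw [← Real.sqrt_sq hφ.le, ← Real.sqrt_mul zero_le_two]
    exact Real.sqrt_le_sqrt (by exact_mod_cast ha.le_two_mul_totient_sq)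
  rw [← Int.cast_pow, moebius_sq_eq_one_of_squarefree ha, Nat.totient_sq, hrpow,
    ← div_eq_mul_inv, Int.cast_one, Nat.cast_mul, div_le_div_iff₀ (by positivity) (by positivity)]
  nlinarith

theorem summable_moebius_sq_div_totient_sq :
    Summable fun a : ℕ => (μ a : ℝ) ^ 2 / φ (a ^ 2) :=
  .of_nonneg_of_le (fun _ => by positivity) moebius_sq_div_totient_sq_le
    ((Real.summable_nat_rpow_inv.mpr (by norm_num)).mul_left _)

theorem Summable.sum_tsum_fiber_le {α ι : Type*} [DecidableEq ι] {f : α → ℝ}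
    (hf : Summable f) (hf0 : ∀ a, 0 ≤ f a) (g : α → ι) (s : Finset ι) {P : ι → α → Prop}
    {Q : α → Prop} (hPQ : ∀ i ∈ s, ∀ a, P i a → Q a) :
    ∑ i ∈ s, ∑' a : {a // P i a ∧ g a = i}, f a ≤ ∑' a : {a // Q a}, f a := by
  have hfiber (i : ι) : ∑' a : {a // P i a ∧ g a = i}, f a =
      ∑' a, {a | P i a ∧ g a = i}.indicator f a := tsum_subtype _ f
  have htail : ∑' a : {a // Q a}, f a = ∑' a, {a | Q a}.indicator f a := tsum_subtype _ f
  rw [Finset.sum_congr rfl fun i _ => hfiber i, htail,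
    ← Summable.tsum_finsetSum fun i _ => hf.indicator _]
  refine Summable.tsum_le_tsum (fun a => ?_) (summable_sum fun i _ => hf.indicator _)
    (hf.indicator _)
  by_cases hs : g a ∈ s
  · rw [Finset.sum_eq_single_of_mem (g a) hs
      fun i _ hi => Set.indicator_of_notMem (fun h => hi h.2.symm) f]
    exact Set.indicator_le_indicator_of_subset (fun x hx => hPQ _ hs x hx.1) hf0 a
  · rw [Finset.sum_eq_zero fun i hi =>
      Set.indicator_of_notMem (s := {a | P i a ∧ g a = i}) (fun h => hs (h.2 ▸ hi)) f]
    exact Set.indicator_nonneg (fun x _ => hf0 x) a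

theorem div_sqrt_le_mul_sqrt_div {B x y z : ℝ} (hB : 0 ≤ B) (hx : 1 ≤ x) (hy : 0 < y)
    (hyz : y ≤ z) : B / Real.sqrt z ≤ B * Real.sqrt (x / y) := by
  rw [Real.sqrt_div' _ hy.le, mul_div_assoc']
  calc B / Real.sqrt z ≤ B / Real.sqrt y := by gcongr
    _ ≤ B * Real.sqrt x / Real.sqrt y := by
        gcongr; exact le_mul_of_one_le_right hB (Real.one_le_sqrt.mpr hx)

theorem sum_divisors_inv_totient_mul_tsum_gcd_le {f : ℕ → ℝ} (hf : Summable f)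
    (hf0 : ∀ a, 0 ≤ f a) {B : ℝ} (hB : 0 ≤ B) {d k : ℕ} (hd : 0 < d) (hdk : d ≤ k) :
    ∑ e ∈ d.divisors, 1 / (φ (d / e) : ℝ) *
        ∑' a : {a : ℕ // B * Real.sqrt ((e : ℝ) / d) < a ∧ a.gcd d = e}, f a ≤
      ∑' a : {a : ℕ // B / Real.sqrt k < a}, f a :=
  calc _ ≤ ∑ e ∈ d.divisors,
        ∑' a : {a : ℕ // B * Real.sqrt ((e : ℝ) / d) < a ∧ a.gcd d = e}, f a :=
        Finset.sum_le_sum fun e _ => mul_le_of_le_one_left (tsum_nonneg fun a => hf0 a)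
          (by rw [one_div]; exact Nat.cast_inv_le_one _)
    _ ≤ _ := hf.sum_tsum_fiber_le hf0 (·.gcd d) _ fun e he a ha =>
        (div_sqrt_le_mul_sqrt_div hB (by exact_mod_cast Nat.pos_of_mem_divisors he)
          (by exact_mod_cast hd) (by exact_mod_cast hdk)).trans_lt ha

open ArithmeticFunction in
theorem divisor_triple_tail_sum_bound_general (k' L : ℕ) (B : ℝ)
    (hsq : Squarefree k') (hL : k'.primeFactors.card = L)
    (hB : 8 * Real.sqrt k' ≤ B) :
    ∑ d ∈ k'.divisors, ∑ e ∈ d.divisors,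
        (1 / (Nat.totient (d / e) : ℝ)) *
          ∑' a : {a : ℕ // B * Real.sqrt ((e : ℝ) / d) < (a : ℝ) ∧ Nat.gcd a d = e},
            ((moebius a : ℝ)) ^ 2 / (Nat.totient ((a : ℕ) ^ 2)) ≤
      2 ^ L * ∑' a : {a : ℕ // B / Real.sqrt k' < (a : ℝ)},
        ((moebius a : ℝ)) ^ 2 / (Nat.totient ((a : ℕ) ^ 2)) := by
  have hB0 : 0 ≤ B := le_trans (by positivity) hB
  calc _ ≤ ∑ _d ∈ k'.divisors, ∑' a : {a : ℕ // B / Real.sqrt k' < (a : ℝ)},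
        ((moebius a : ℝ)) ^ 2 / (Nat.totient ((a : ℕ) ^ 2)) :=
        Finset.sum_le_sum fun d hd => sum_divisors_inv_totient_mul_tsum_gcd_le
          summable_moebius_sq_div_totient_sq (fun _ => by positivity) hB0
          (Nat.pos_of_mem_divisors hd) (Nat.divisor_le hd)
    _ = _ := by rw [Finset.sum_const, hsq.card_divisors, hL, nsmul_eq_mul, Nat.cast_pow,
        Nat.cast_ofNat]

open ArithmeticFunction in
theorem divisor_triple_tail_sum_bound (k' L : ℕ) (B : ℝ) (hk : 0 < k')
    (hsq : Squarefree k') (hodd : Odd k') (hL : k'.primeFactors.card = L)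
    (hB : 8 * Real.sqrt k' ≤ B) :
    ∑ d ∈ k'.divisors, ∑ e ∈ d.divisors,
        (1 / (Nat.totient (d / e) : ℝ)) *
          ∑' a : {a : ℕ // B * Real.sqrt ((e : ℝ) / d) < (a : ℝ) ∧ Nat.gcd a d = e},
            ((moebius a : ℝ)) ^ 2 / (Nat.totient ((a : ℕ) ^ 2)) ≤
      2 ^ L * ∑' a : {a : ℕ // B / Real.sqrt k' < (a : ℝ)},
        ((moebius a : ℝ)) ^ 2 / (Nat.totient ((a : ℕ) ^ 2)) :=
  divisor_triple_tail_sum_bound_general k' L B hsq hL hB
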